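/- Let N ≥ 1 and L ≥ 1 be integers and let p_min, q_min be positive reals with q_min·( p_min + p_min²·L(L−1)/2 ) > 0. If N(N−1) > 1 / ( q_min·( p_min + p_min²·L(L−1)/2 ) ), then for any (p_{n,k}) with p_{n,k} ≥ p_min and ∑_{k=1}^L p_{n,k} = 1 for every n, and any (q_n) with q_n ≥ q_min for every n, one has ∑_{n=1}^N q_n · ∑_{k=1}^L p_{n,k} · (∑_{m ≠ n} ∑_{l=k}^L p_{m,l}) > 1; consequently, for any real β with 0 < β and βN < 1, ε = β·( ∑_{n=1}^N q_n ∑_{k=1}^L p_{n,k} (∑_{m ≠ n} ∑_{l=k}^L p_{m,l}) − 1 ) / (1 − βN) > 0. -/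

import Mathlib

/-!
Split `∑_{l ≥ k} p_{m,l}` into `p_{m,k}` and the terms with `l > k`. Since `p_{n,k} ≥ p_min` and
`∑_k p_{m,k} = 1`, the first part contributes at least `p_min` and the second at least `p_min²`
for each of the `L(L-1)/2` pairs `k < l`. Summing over the `N - 1` rivals of each user and
weighting by `q_n ≥ q_min` gives `E[M] ≥ N(N-1) q_min (p_min + p_min² L(L-1)/2) > 1`.
-/

open Finset

theorem Fin.sum_card_Ioi (L : ℕ) : ∑ k : Fin L, #(Ioi k) = L.choose 2 := by
  simp only [Fin.card_Ioi]
  rw [Fin.sum_univ_eq_sum_range (fun i => L - 1 - i), sum_range_reflect (fun i => i),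
    sum_range_id, Nat.choose_two_right]

theorem add_sq_mul_choose_le_sum_mul_sum_Ici {L : ℕ} {a : ℝ} {x y : Fin L → ℝ}
    (ha : 0 ≤ a) (hx : ∀ k, a ≤ x k) (hy : ∀ k, a ≤ y k) (hy_sum : ∑ k, y k = 1) :
    a + a ^ 2 * L.choose 2 ≤ ∑ k, x k * ∑ l ∈ Ici k, y l := by
  have hx₀ k : 0 ≤ x k := ha.trans (hx k)
  have hy₀ k : 0 ≤ y k := ha.trans (hy k)
  have hdiag : a ≤ ∑ k, x k * y k :=
    calc a = ∑ k, a * y k := by rw [← mul_sum, hy_sum, mul_one]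
      _ ≤ ∑ k, x k * y k := sum_le_sum fun k _ => mul_le_mul_of_nonneg_right (hx k) (hy₀ k)
  have hoff : a ^ 2 * L.choose 2 ≤ ∑ k, x k * ∑ l ∈ Ioi k, y l :=
    calc a ^ 2 * L.choose 2 = ∑ k : Fin L, a * (#(Ioi k) * a) := by
          rw [← Fin.sum_card_Ioi, Nat.cast_sum, mul_sum]
          exact sum_congr rfl fun k _ => by ring
      _ ≤ ∑ k, x k * ∑ l ∈ Ioi k, y l := by
          gcongr with k
          · exact hx₀ k
          · exact hx k
          · simpa using card_nsmul_le_sum (Ioi k) y a fun l _ => hy l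
  have hsplit k : ∑ l ∈ Ici k, y l = y k + ∑ l ∈ Ioi k, y l := by
    rw [← Ioi_insert, sum_insert notMem_Ioi_self]
  simp only [hsplit, mul_add, sum_add_distrib]
  exact add_le_add hdiag hoff

theorem stmt_11_general (N L : ℕ)
    (pmin qmin : ℝ) (hpmin : 0 < pmin) (hqmin : 0 < qmin)
    (hpos : 0 < qmin * (pmin + pmin ^ 2 * ((L : ℝ) * ((L : ℝ) - 1) / 2)))
    (hcond : 1 / (qmin * (pmin + pmin ^ 2 * ((L : ℝ) * ((L : ℝ) - 1) / 2)))
      < (N : ℝ) * ((N : ℝ) - 1))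
    (p : Fin N → Fin L → ℝ) (hp : ∀ n k, pmin ≤ p n k)
    (hpsum : ∀ n, ∑ k, p n k = 1)
    (q : Fin N → ℝ) (hq : ∀ n, qmin ≤ q n) :
    (1 < ∑ n, q n * ∑ k, p n k *
          ∑ m ∈ Finset.univ.erase n, ∑ l ∈ Finset.Ici k, p m l) ∧
    (∀ β : ℝ, 0 < β → β * (N : ℝ) < 1 →
      0 < β * ((∑ n, q n * ∑ k, p n k *
            ∑ m ∈ Finset.univ.erase n, ∑ l ∈ Finset.Ici k, p m l) - 1)
          / (1 - β * (N : ℝ))) := by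
  set C := pmin + pmin ^ 2 * ((L : ℝ) * ((L : ℝ) - 1) / 2)
  have hpair n m : C ≤ ∑ k, p n k * ∑ l ∈ Ici k, p m l := by
    simpa [C, Nat.cast_choose_two] using
      add_sq_mul_choose_le_sum_mul_sum_Ici hpmin.le (hp n) (hp m) (hpsum m)
  have hC : 0 < C := pos_of_mul_pos_right hpos hqmin.le
  have huser n : (N - 1 : ℝ) * C ≤ ∑ k, p n k * ∑ m ∈ univ.erase n, ∑ l ∈ Ici k, p m l := by
    have hrivals : (#(univ.erase n) : ℝ) = N - 1 := by
      rw [card_erase_of_mem (mem_univ n), card_univ, Fintype.card_fin, Nat.cast_pred (Fin.pos n)]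
    calc (N - 1 : ℝ) * C = #(univ.erase n) • C := by rw [nsmul_eq_mul, hrivals]
      _ ≤ ∑ m ∈ univ.erase n, ∑ k, p n k * ∑ l ∈ Ici k, p m l :=
          card_nsmul_le_sum _ _ C fun m _ => hpair n m
      _ = _ := by simp only [mul_sum]; exact sum_comm
  have htotal : N * (qmin * ((N - 1 : ℝ) * C)) ≤
      ∑ n, q n * ∑ k, p n k * ∑ m ∈ univ.erase n, ∑ l ∈ Ici k, p m l := by
    have hrivals₀ (n : Fin N) : (0 : ℝ) ≤ N - 1 := sub_nonneg.2 (Nat.one_le_cast.2 (Fin.pos n))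
    simpa using card_nsmul_le_sum univ _ _ fun n _ =>
      mul_le_mul (hq n) (huser n) (mul_nonneg (hrivals₀ n) hC.le) (hqmin.le.trans (hq n))
  have hgt : 1 < N * (N - 1 : ℝ) * (qmin * C) := by
    rwa [one_div, inv_lt_iff_one_lt_mul₀ hpos] at hcond
  have hmain : 1 < ∑ n, q n * ∑ k, p n k * ∑ m ∈ univ.erase n, ∑ l ∈ Ici k, p m l := by
    linarith
  exact ⟨hmain, fun β hβ hβN => div_pos (mul_pos hβ (by linarith)) (by linarith)⟩

/-- Theorem 4 of the paper: if `N(N−1) > 1/(q_min·(p_min + p_min²·L(L−1)/2))`, then for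
heterogeneous channels with `p_{n,k} ≥ p_min`, `∑_k p_{n,k} = 1`, and `q_n ≥ q_min`, the
expected number of non-reporting users exceeds `1`, and hence for any `β` with `0 < β`
and `βN < 1`, `ε = β(E[M]−1)/(1−βN) > 0`. -/
theorem stmt_11 (N L : ℕ) (hN : 1 ≤ N) (hL : 1 ≤ L)
    (pmin qmin : ℝ) (hpmin : 0 < pmin) (hqmin : 0 < qmin)
    (hpos : 0 < qmin * (pmin + pmin ^ 2 * ((L : ℝ) * ((L : ℝ) - 1) / 2)))
    (hcond : 1 / (qmin * (pmin + pmin ^ 2 * ((L : ℝ) * ((L : ℝ) - 1) / 2)))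
      < (N : ℝ) * ((N : ℝ) - 1))
    (p : Fin N → Fin L → ℝ) (hp : ∀ n k, pmin ≤ p n k)
    (hpsum : ∀ n, ∑ k, p n k = 1)
    (q : Fin N → ℝ) (hq : ∀ n, qmin ≤ q n) :
    (1 < ∑ n, q n * ∑ k, p n k *
          ∑ m ∈ Finset.univ.erase n, ∑ l ∈ Finset.Ici k, p m l) ∧
    (∀ β : ℝ, 0 < β → β * (N : ℝ) < 1 →
      0 < β * ((∑ n, q n * ∑ k, p n k *
            ∑ m ∈ Finset.univ.erase n, ∑ l ∈ Finset.Ici k, p m l) - 1)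
          / (1 - β * (N : ℝ))) :=
  stmt_11_general N L pmin qmin hpmin hqmin hpos hcond p hp hpsum q hq
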